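/- arXiv:1809.01282 — 4 statements merged into one kernel-verified Lean document; each statement's English description precedes it below -/
import Mathlib

section
/- For any family (ℰ_ω)_{ω∈Ω} of exact structures on an additive category 𝒜, the intersection ⋂_{ω∈Ω} ℰ_ω is again an exact structure on 𝒜. -/
open CategoryTheory CategoryTheory.Limits

universe v u

variable {C : Type u} [Category.{v} C] [Preadditive C]

/-- A kernel-cokernel pair: `S.f` is a kernel of `S.g` and `S.g` is a cokernel of `S.f`. -/
structure IsKernelCokernelPair (S : ShortComplex C) : Prop where
  isKernel : Nonempty (IsLimit (KernelFork.ofι S.f S.zero))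
  isCokernel : Nonempty (IsColimit (CokernelCofork.ofπ S.g S.zero))

/-- `i` is an admissible monic for the class `E`. -/
def AdmissibleMono (E : Set (ShortComplex C)) {A B : C} (i : A ⟶ B) : Prop :=
  ∃ (Z : C) (d : B ⟶ Z) (w : i ≫ d = 0), ShortComplex.mk i d w ∈ E

/-- `d` is an admissible epic for the class `E`. -/
def AdmissibleEpi (E : Set (ShortComplex C)) {B Z : C} (d : B ⟶ Z) : Prop :=
  ∃ (A : C) (i : A ⟶ B) (w : i ≫ d = 0), ShortComplex.mk i d w ∈ E

/-- Quillen's axioms for an exact structure on an additive category. -/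
structure IsExactStructure (E : Set (ShortComplex C)) : Prop where
  kcp : ∀ S ∈ E, IsKernelCokernelPair S
  iso_closed : ∀ S T : ShortComplex C, S ∈ E → Nonempty (S ≅ T) → T ∈ E
  id_mono : ∀ A : C, AdmissibleMono E (𝟙 A)
  id_epi : ∀ A : C, AdmissibleEpi E (𝟙 A)
  mono_comp : ∀ {A B D : C} (i : A ⟶ B) (j : B ⟶ D),
    AdmissibleMono E i → AdmissibleMono E j → AdmissibleMono E (i ≫ j)
  epi_comp : ∀ {A B D : C} (p : A ⟶ B) (q : B ⟶ D),
    AdmissibleEpi E p → AdmissibleEpi E q → AdmissibleEpi E (p ≫ q)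
  pushout : ∀ {A B X : C} (i : A ⟶ B) (t : A ⟶ X), AdmissibleMono E i →
    ∃ (P : C) (sB : B ⟶ P) (sX : X ⟶ P), IsPushout i t sB sX ∧ AdmissibleMono E sX
  pullback : ∀ {B X Y : C} (d : B ⟶ X) (t : Y ⟶ X), AdmissibleEpi E d →
    ∃ (P : C) (pB : P ⟶ B) (pY : P ⟶ Y), IsPullback pB pY d t ∧ AdmissibleEpi E pY

/-- The class of split short exact sequences: those isomorphic to
`A → A ⊞ B → B` with the canonical inclusion and projection. -/
def splitClass (C : Type u) [Category.{v} C] [Preadditive C] [HasBinaryBiproducts C] :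
    Set (ShortComplex C) :=
  { S | ∃ (A B : C), Nonempty (S ≅ ShortComplex.mk (biprod.inl : A ⟶ A ⊞ B)
      (biprod.snd : A ⊞ B ⟶ B) (by simp)) }

/-! In an exact structure an admissible monic lies in a conflation with *every* cokernel of it.
Hence a morphism admissible for each member of a nonempty family, completed to a conflation of
one fixed member, is completed to a conflation of all of them at once. Pushouts along admissible
monics are unique up to isomorphism, so the pushout axiom passes to the intersection as well;
everything dualizes to admissible epics and pullbacks. -/

namespace IsExactStructure

variable {E : Set (ShortComplex C)}

lemma mk_mem_of_admissibleMono (hE : IsExactStructure E) {A B Z : C} {m : A ⟶ B}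
    {d : B ⟶ Z} {w : m ≫ d = 0} (hm : AdmissibleMono E m)
    (hd : IsColimit (CokernelCofork.ofπ d w)) : ShortComplex.mk m d w ∈ E := by
  obtain ⟨_, _, _, hS⟩ := hm
  obtain ⟨hd'⟩ := (hE.kcp _ hS).isCokernel
  refine hE.iso_closed _ _ hS ⟨ShortComplex.isoMk (Iso.refl _) (Iso.refl _)
    (hd'.coconePointUniqueUpToIso hd) (by simp) ?_⟩
  simpa using (hd'.comp_coconePointUniqueUpToIso_hom hd WalkingParallelPair.one).symm

lemma mk_mem_of_admissibleEpi (hE : IsExactStructure E) {A B Z : C} {p : B ⟶ Z}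
    {i : A ⟶ B} {w : i ≫ p = 0} (hp : AdmissibleEpi E p)
    (hi : IsLimit (KernelFork.ofι i w)) : ShortComplex.mk i p w ∈ E := by
  obtain ⟨_, _, _, hS⟩ := hp
  obtain ⟨hi'⟩ := (hE.kcp _ hS).isKernel
  refine hE.iso_closed _ _ hS ⟨ShortComplex.isoMk (hi'.conePointUniqueUpToIso hi)
    (Iso.refl _) (Iso.refl _) ?_ (by simp)⟩
  simpa using hi'.conePointUniqueUpToIso_hom_comp hi WalkingParallelPair.zero

lemma admissibleMono_comp_iso (hE : IsExactStructure E) {A B B' : C} {m : A ⟶ B}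
    (hm : AdmissibleMono E m) (e : B ≅ B') : AdmissibleMono E (m ≫ e.hom) := by
  obtain ⟨Z, d, w, hS⟩ := hm
  exact ⟨Z, e.inv ≫ d, by simp [w], hE.iso_closed _ _ hS
    ⟨ShortComplex.isoMk (Iso.refl _) e (Iso.refl _) (by simp) (by simp)⟩⟩

lemma admissibleEpi_iso_comp (hE : IsExactStructure E) {B B' Z : C} {p : B ⟶ Z}
    (hp : AdmissibleEpi E p) (e : B' ≅ B) : AdmissibleEpi E (e.hom ≫ p) := by
  obtain ⟨A, i, w, hS⟩ := hp
  exact ⟨A, i ≫ e.inv, by simp [w], hE.iso_closed _ _ hS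
    ⟨ShortComplex.isoMk (Iso.refl _) e.symm (Iso.refl _) (by simp) (by simp)⟩⟩

lemma admissibleMono_of_isPushout (hE : IsExactStructure E) {A B X P P' : C}
    {i : A ⟶ B} {t : A ⟶ X} {sB : B ⟶ P} {sX : X ⟶ P} {sB' : B ⟶ P'} {sX' : X ⟶ P'}
    (hP : IsPushout i t sB sX) (hP' : IsPushout i t sB' sX') (hsX' : AdmissibleMono E sX') :
    AdmissibleMono E sX := by
  simpa using hE.admissibleMono_comp_iso hsX' (hP'.isoIsPushout _ _ hP)

lemma admissibleEpi_of_isPullback (hE : IsExactStructure E) {B X Y P P' : C}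
    {d : B ⟶ X} {t : Y ⟶ X} {pB : P ⟶ B} {pY : P ⟶ Y} {pB' : P' ⟶ B} {pY' : P' ⟶ Y}
    (hP : IsPullback pB pY d t) (hP' : IsPullback pB' pY' d t) (hpY' : AdmissibleEpi E pY') :
    AdmissibleEpi E pY := by
  simpa using hE.admissibleEpi_iso_comp hpY' (hP.isoIsPullback _ _ hP')

end IsExactStructure

section iInter

variable {Ω : Type*} [Nonempty Ω] {𝓔 : Ω → Set (ShortComplex C)}

lemma admissibleMono_iInter_iff (h : ∀ ω, IsExactStructure (𝓔 ω)) {A B : C} {m : A ⟶ B} :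
    AdmissibleMono (⋂ ω, 𝓔 ω) m ↔ ∀ ω, AdmissibleMono (𝓔 ω) m := by
  refine ⟨fun ⟨Z, d, w, hS⟩ ω => ⟨Z, d, w, Set.mem_iInter.1 hS ω⟩, fun hm => ?_⟩
  obtain ⟨Z, d, w, hS⟩ := hm (Classical.arbitrary Ω)
  obtain ⟨hd⟩ := ((h _).kcp _ hS).isCokernel
  exact ⟨Z, d, w, Set.mem_iInter.2 fun ω => (h ω).mk_mem_of_admissibleMono (hm ω) hd⟩

lemma admissibleEpi_iInter_iff (h : ∀ ω, IsExactStructure (𝓔 ω)) {B Z : C} {p : B ⟶ Z} :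
    AdmissibleEpi (⋂ ω, 𝓔 ω) p ↔ ∀ ω, AdmissibleEpi (𝓔 ω) p := by
  refine ⟨fun ⟨A, i, w, hS⟩ ω => ⟨A, i, w, Set.mem_iInter.1 hS ω⟩, fun hp => ?_⟩
  obtain ⟨A, i, w, hS⟩ := hp (Classical.arbitrary Ω)
  obtain ⟨hi⟩ := ((h _).kcp _ hS).isKernel
  exact ⟨A, i, w, Set.mem_iInter.2 fun ω => (h ω).mk_mem_of_admissibleEpi (hp ω) hi⟩

end iInter

/-- The intersection of a (nonempty) family of exact structures on an additive
category is again an exact structure. -/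
theorem iInter_isExactStructure {Ω : Type*} [Nonempty Ω]
    (𝓔 : Ω → Set (ShortComplex C)) (h : ∀ ω, IsExactStructure (𝓔 ω)) :
    IsExactStructure (⋂ ω, 𝓔 ω) := by
  constructor
  · exact fun S hS => (h (Classical.arbitrary Ω)).kcp S (Set.mem_iInter.1 hS _)
  · exact fun S T hS hST =>
      Set.mem_iInter.2 fun ω => (h ω).iso_closed S T (Set.mem_iInter.1 hS ω) hST
  · exact fun A => (admissibleMono_iInter_iff h).2 fun ω => (h ω).id_mono A
  · exact fun A => (admissibleEpi_iInter_iff h).2 fun ω => (h ω).id_epi A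
  · intro A B D i j hi hj
    rw [admissibleMono_iInter_iff h] at hi hj ⊢
    exact fun ω => (h ω).mono_comp i j (hi ω) (hj ω)
  · intro A B D p q hp hq
    rw [admissibleEpi_iInter_iff h] at hp hq ⊢
    exact fun ω => (h ω).epi_comp p q (hp ω) (hq ω)
  · intro A B X i t hi
    rw [admissibleMono_iInter_iff h] at hi
    obtain ⟨P, sB, sX, hP, -⟩ := (h (Classical.arbitrary Ω)).pushout i t (hi _)
    refine ⟨P, sB, sX, hP, (admissibleMono_iInter_iff h).2 fun ω => ?_⟩
    obtain ⟨_, _, _, hP', hsX'⟩ := (h ω).pushout i t (hi ω)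
    exact (h ω).admissibleMono_of_isPushout hP hP' hsX'
  · intro B X Y d t hd
    rw [admissibleEpi_iInter_iff h] at hd
    obtain ⟨P, pB, pY, hP, -⟩ := (h (Classical.arbitrary Ω)).pullback d t (hd _)
    refine ⟨P, pB, pY, hP, (admissibleEpi_iInter_iff h).2 fun ω => ?_⟩
    obtain ⟨_, _, _, hP', hpY'⟩ := (h ω).pullback d t (hd ω)
    exact (h ω).admissibleEpi_of_isPullback hP hP' hpY'
end

section
/- Let F : (𝒜, ℰ_𝒜) → (ℬ, ℰ_ℬ) be an exact functor between exact categories. Then the class ℰ_F of short exact sequences ξ in ℰ_𝒜 such that F(ξ) is split exact in ℬ forms an exact structure on 𝒜. -/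
open CategoryTheory CategoryTheory.Limits

universe v u

variable {C : Type u} [Category.{v} C] [Preadditive C]

/-! A conflation of `ℰ_𝒜` lies in `ℰ_F` as soon as `F` of its inflation is a split mono, or `F` of
its deflation is a split epi: `F` maps it to a kernel–cokernel pair, and one half of a splitting
of a kernel–cokernel pair produces the other. Split monos and split epis are closed under
composition, which gives the composition axioms. The pushout of a conflation `A ↣ B ↠ Z` along
`t : A → X` is a conflation `X ↣ P ↠ Z` whose deflation restricts to `B ↠ Z` along `B → P`, so a
section of `F(B ↠ Z)` followed by `F(B → P)` is a section of `F(P ↠ Z)`; pullbacks are dual. -/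

namespace CategoryTheory

variable {K : Type*} [Category K]

lemma IsSplitEpi.of_comp {X Y Z : K} (f : X ⟶ Y) (g : Y ⟶ Z) [IsSplitEpi (f ≫ g)] :
    IsSplitEpi g :=
  ⟨⟨section_ (f ≫ g) ≫ f, by rw [Category.assoc, IsSplitEpi.id]⟩⟩

lemma IsSplitMono.of_comp {X Y Z : K} (f : X ⟶ Y) (g : Y ⟶ Z) [IsSplitMono (f ≫ g)] :
    IsSplitMono f :=
  ⟨⟨g ≫ retraction (f ≫ g), by rw [← Category.assoc, IsSplitMono.id]⟩⟩

namespace ShortComplex.Splitting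

variable {S : ShortComplex C}

noncomputable def ofIsColimitOfRetraction (hS : IsColimit (CokernelCofork.ofπ S.g S.zero))
    (r : S.X₂ ⟶ S.X₁) (f_r : S.f ≫ r = 𝟙 _) : S.Splitting :=
  let s := CokernelCofork.IsColimit.desc' hS (𝟙 _ - r ≫ S.f) (by simp [reassoc_of% f_r])
  have g_s : S.g ≫ s.1 = 𝟙 _ - r ≫ S.f := s.2
  { r, s := s.1, f_r
    s_g := Cofork.IsColimit.hom_ext hS (by simp [reassoc_of% g_s])
    id := by rw [g_s]; abel }

noncomputable def ofIsLimitOfSection (hS : IsLimit (KernelFork.ofι S.f S.zero))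
    (s : S.X₃ ⟶ S.X₂) (s_g : s ≫ S.g = 𝟙 _) : S.Splitting :=
  let r := KernelFork.IsLimit.lift' hS (𝟙 _ - S.g ≫ s) (by simp [s_g])
  have r_f : r.1 ≫ S.f = 𝟙 _ - S.g ≫ s := r.2
  { r := r.1, s, s_g
    f_r := Fork.IsLimit.hom_ext hS (by simp [r_f])
    id := by rw [r_f]; abel }

end ShortComplex.Splitting

end CategoryTheory

section SplitClass

variable [HasBinaryBiproducts C] {S : ShortComplex C}

lemma mem_splitClass_iff_nonempty_splitting : S ∈ splitClass C ↔ Nonempty S.Splitting := by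
  constructor
  · rintro ⟨A, B, ⟨e⟩⟩
    exact ⟨(ShortComplex.Splitting.ofHasBinaryBiproduct A B).ofIso e.symm⟩
  · rintro ⟨σ⟩
    exact ⟨S.X₁, S.X₃, ⟨ShortComplex.isoMk (Iso.refl _) σ.isoBinaryBiproduct (Iso.refl _)
      (by ext <;> simp [σ.f_r]) (by simp)⟩⟩

lemma mem_splitClass_of_iso {T : ShortComplex C} (hS : S ∈ splitClass C) (e : S ≅ T) :
    T ∈ splitClass C := by
  obtain ⟨A, B, ⟨e'⟩⟩ := hS
  exact ⟨A, B, ⟨e.symm ≪≫ e'⟩⟩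

lemma isSplitMono_f_of_mem_splitClass (hS : S ∈ splitClass C) : IsSplitMono S.f :=
  (mem_splitClass_iff_nonempty_splitting.1 hS).some.isSplitMono_f

lemma isSplitEpi_g_of_mem_splitClass (hS : S ∈ splitClass C) : IsSplitEpi S.g :=
  (mem_splitClass_iff_nonempty_splitting.1 hS).some.isSplitEpi_g

lemma IsKernelCokernelPair.mem_splitClass_of_isSplitMono (hS : IsKernelCokernelPair S)
    (hf : IsSplitMono S.f) : S ∈ splitClass C :=
  mem_splitClass_iff_nonempty_splitting.2
    ⟨.ofIsColimitOfRetraction hS.isCokernel.some (retraction S.f) (IsSplitMono.id S.f)⟩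

lemma IsKernelCokernelPair.mem_splitClass_of_isSplitEpi (hS : IsKernelCokernelPair S)
    (hg : IsSplitEpi S.g) : S ∈ splitClass C :=
  mem_splitClass_iff_nonempty_splitting.2
    ⟨.ofIsLimitOfSection hS.isKernel.some (section_ S.g) (IsSplitEpi.id S.g)⟩

end SplitClass

namespace CategoryTheory

variable {A B X Y P Z : C}

noncomputable def IsPushout.isColimitCokernelCoforkInr {i : A ⟶ B} {t : A ⟶ X} {sB : B ⟶ P}
    {sX : X ⟶ P} (hP : IsPushout i t sB sX) {d : B ⟶ Z} {w : i ≫ d = 0}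
    (hd : IsColimit (CokernelCofork.ofπ d w)) :
    IsColimit (CokernelCofork.ofπ (hP.desc d 0 (by simp [w])) (hP.inr_desc _ _ _)) :=
  CokernelCofork.IsColimit.ofπ _ _
    (fun g hg => hd.desc (CokernelCofork.ofπ (sB ≫ g) (by rw [← Category.assoc, hP.w,
      Category.assoc, hg, comp_zero])))
    (fun g hg => hP.hom_ext (by rw [hP.inl_desc_assoc]; exact Cofork.IsColimit.π_desc hd)
      (by simp [hg]))
    (fun g hg m hm => by
      subst hm
      exact Cofork.IsColimit.hom_ext hd (by
        rw [Cofork.IsColimit.π_desc hd]; exact (hP.inl_desc_assoc _ _ _ _).symm))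

noncomputable def IsPullback.isLimitKernelForkSnd {pB : P ⟶ B} {pY : P ⟶ Y} {d : B ⟶ X}
    {t : Y ⟶ X} (hP : IsPullback pB pY d t) {i : A ⟶ B} {w : i ≫ d = 0}
    (hi : IsLimit (KernelFork.ofι i w)) :
    IsLimit (KernelFork.ofι (hP.lift i 0 (by simp [w])) (hP.lift_snd _ _ _)) :=
  KernelFork.IsLimit.ofι _ _
    (fun g hg => hi.lift (KernelFork.ofι (g ≫ pB) (by rw [Category.assoc, hP.w,
      ← Category.assoc, hg, zero_comp])))
    (fun g hg => hP.hom_ext (by rw [Category.assoc, hP.lift_fst]; exact Fork.IsLimit.lift_ι hi)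
      (by simp [hg]))
    (fun g hg m hm => by
      subst hm
      exact Fork.IsLimit.hom_ext hi (by
        rw [Fork.IsLimit.lift_ι hi]
        change m ≫ i = (m ≫ hP.lift i 0 _) ≫ pB
        rw [Category.assoc, hP.lift_fst]))

end CategoryTheory

namespace IsExactStructure

variable {E : Set (ShortComplex C)} (hE : IsExactStructure E) {S : ShortComplex C}
include hE

lemma mk_mem_of_isColimit (hS : S ∈ E) {Z : C} (g : S.X₂ ⟶ Z) (w : S.f ≫ g = 0)
    (hg : IsColimit (CokernelCofork.ofπ g w)) : ShortComplex.mk S.f g w ∈ E := by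
  obtain ⟨hc⟩ := (hE.kcp S hS).isCokernel
  refine hE.iso_closed S _ hS ⟨ShortComplex.isoMk (Iso.refl _) (Iso.refl _)
    (hc.coconePointUniqueUpToIso hg) (by simp) ?_⟩
  simpa using (hc.comp_coconePointUniqueUpToIso_hom hg WalkingParallelPair.one).symm

lemma mk_mem_of_isLimit (hS : S ∈ E) {W : C} (f : W ⟶ S.X₂) (w : f ≫ S.g = 0)
    (hf : IsLimit (KernelFork.ofι f w)) : ShortComplex.mk f S.g w ∈ E := by
  obtain ⟨hk⟩ := (hE.kcp S hS).isKernel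
  refine hE.iso_closed S _ hS ⟨ShortComplex.isoMk (hk.conePointUniqueUpToIso hf)
    (Iso.refl _) (Iso.refl _) ?_ (by simp)⟩
  simpa using hk.conePointUniqueUpToIso_hom_comp hf WalkingParallelPair.zero

lemma exists_isPushout_mk_mem {A B Z : C} {i : A ⟶ B} {d : B ⟶ Z} {w : i ≫ d = 0}
    (hS : ShortComplex.mk i d w ∈ E) {X : C} (t : A ⟶ X) :
    ∃ (P : C) (sB : B ⟶ P) (sX : X ⟶ P) (d' : P ⟶ Z) (w' : sX ≫ d' = 0),
      IsPushout i t sB sX ∧ sB ≫ d' = d ∧ ShortComplex.mk sX d' w' ∈ E := by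
  obtain ⟨P, sB, sX, hP, _, _, _, h₀⟩ := hE.pushout i t ⟨Z, d, w, hS⟩
  exact ⟨P, sB, sX, _, _, hP, hP.inl_desc _ _ _, hE.mk_mem_of_isColimit h₀ _ _
    (hP.isColimitCokernelCoforkInr (hE.kcp _ hS).isCokernel.some)⟩

lemma exists_isPullback_mk_mem {A B X : C} {i : A ⟶ B} {d : B ⟶ X} {w : i ≫ d = 0}
    (hS : ShortComplex.mk i d w ∈ E) {Y : C} (t : Y ⟶ X) :
    ∃ (P : C) (pB : P ⟶ B) (pY : P ⟶ Y) (i' : A ⟶ P) (w' : i' ≫ pY = 0),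
      IsPullback pB pY d t ∧ i' ≫ pB = i ∧ ShortComplex.mk i' pY w' ∈ E := by
  obtain ⟨P, pB, pY, hP, _, _, _, h₀⟩ := hE.pullback d t ⟨A, i, w, hS⟩
  exact ⟨P, pB, pY, _, _, hP, hP.lift_fst _ _ _, hE.mk_mem_of_isLimit h₀ _ _
    (hP.isLimitKernelForkSnd (hE.kcp _ hS).isKernel.some)⟩

end IsExactStructure

section FunctorSplitClass

variable {D : Type*} [Category D] [Preadditive D] [HasBinaryBiproducts D]
  {EA : Set (ShortComplex C)} {EB : Set (ShortComplex D)} (hEB : IsExactStructure EB)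
  {F : C ⥤ D} [F.PreservesZeroMorphisms] (hF : ∀ S ∈ EA, S.map F ∈ EB)

/-- The class `ℰ_F`. -/
def functorSplitClass (EA : Set (ShortComplex C)) (F : C ⥤ D) [F.PreservesZeroMorphisms] :
    Set (ShortComplex C) :=
  { S | S ∈ EA ∧ S.map F ∈ splitClass D }

include hEB hF

lemma admissibleMono_functorSplitClass_iff {A B : C} {i : A ⟶ B} :
    AdmissibleMono (functorSplitClass EA F) i ↔ AdmissibleMono EA i ∧ IsSplitMono (F.map i) :=
  ⟨fun ⟨Z, d, w, hS, hsplit⟩ => ⟨⟨Z, d, w, hS⟩, isSplitMono_f_of_mem_splitClass hsplit⟩,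
    fun ⟨⟨Z, d, w, hS⟩, hsplit⟩ =>
      ⟨Z, d, w, hS, (hEB.kcp _ (hF _ hS)).mem_splitClass_of_isSplitMono hsplit⟩⟩

lemma admissibleEpi_functorSplitClass_iff {B X : C} {d : B ⟶ X} :
    AdmissibleEpi (functorSplitClass EA F) d ↔ AdmissibleEpi EA d ∧ IsSplitEpi (F.map d) :=
  ⟨fun ⟨A, i, w, hS, hsplit⟩ => ⟨⟨A, i, w, hS⟩, isSplitEpi_g_of_mem_splitClass hsplit⟩,
    fun ⟨⟨A, i, w, hS⟩, hsplit⟩ =>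
      ⟨A, i, w, hS, (hEB.kcp _ (hF _ hS)).mem_splitClass_of_isSplitEpi hsplit⟩⟩

lemma exists_isPushout_admissibleMono_functorSplitClass (hEA : IsExactStructure EA)
    {A B X : C} {i : A ⟶ B} (hi : AdmissibleMono (functorSplitClass EA F) i) (t : A ⟶ X) :
    ∃ (P : C) (sB : B ⟶ P) (sX : X ⟶ P),
      IsPushout i t sB sX ∧ AdmissibleMono (functorSplitClass EA F) sX := by
  obtain ⟨Z, d, w, hS, hsplit⟩ := hi
  obtain ⟨P, sB, sX, d', w', hP, hd', hS'⟩ := hEA.exists_isPushout_mk_mem hS t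
  have : IsSplitEpi (F.map sB ≫ F.map d') := by
    rw [← F.map_comp, hd']
    exact isSplitEpi_g_of_mem_splitClass hsplit
  exact ⟨P, sB, sX, hP, Z, d', w', hS',
    (hEB.kcp _ (hF _ hS')).mem_splitClass_of_isSplitEpi (.of_comp (F.map sB) (F.map d'))⟩

lemma exists_isPullback_admissibleEpi_functorSplitClass (hEA : IsExactStructure EA)
    {B X Y : C} {d : B ⟶ X} (hd : AdmissibleEpi (functorSplitClass EA F) d) (t : Y ⟶ X) :
    ∃ (P : C) (pB : P ⟶ B) (pY : P ⟶ Y),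
      IsPullback pB pY d t ∧ AdmissibleEpi (functorSplitClass EA F) pY := by
  obtain ⟨A, i, w, hS, hsplit⟩ := hd
  obtain ⟨P, pB, pY, i', w', hP, hi', hS'⟩ := hEA.exists_isPullback_mk_mem hS t
  have : IsSplitMono (F.map i' ≫ F.map pB) := by
    rw [← F.map_comp, hi']
    exact isSplitMono_f_of_mem_splitClass hsplit
  exact ⟨P, pB, pY, hP, A, i', w', hS',
    (hEB.kcp _ (hF _ hS')).mem_splitClass_of_isSplitMono (.of_comp (F.map i') (F.map pB))⟩

end FunctorSplitClass

/-- If `F : (𝒜, ℰ_𝒜) → (ℬ, ℰ_ℬ)` is an exact functor between exact categories,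
then the class of short exact sequences of `ℰ_𝒜` whose image under `F` is split
exact forms an exact structure on `𝒜`. -/
theorem exactFunctor_reduction {D : Type*} [Category D] [Preadditive D]
    [HasBinaryBiproducts D]
    (EA : Set (ShortComplex C)) (hEA : IsExactStructure EA)
    (EB : Set (ShortComplex D)) (hEB : IsExactStructure EB)
    (F : C ⥤ D) [F.Additive]
    (hF : ∀ S ∈ EA, S.map F ∈ EB) :
    IsExactStructure { S : ShortComplex C | S ∈ EA ∧ S.map F ∈ splitClass D } :=
  { kcp S hS := hEA.kcp S hS.1
    iso_closed S T hS := fun ⟨e⟩ =>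
      ⟨hEA.iso_closed S T hS.1 ⟨e⟩, mem_splitClass_of_iso hS.2 (F.mapShortComplex.mapIso e)⟩
    id_mono A := (admissibleMono_functorSplitClass_iff hEB hF).2
      ⟨hEA.id_mono A, by rw [F.map_id]; infer_instance⟩
    id_epi A := (admissibleEpi_functorSplitClass_iff hEB hF).2
      ⟨hEA.id_epi A, by rw [F.map_id]; infer_instance⟩
    mono_comp i j hi hj := by
      obtain ⟨hi, _⟩ := (admissibleMono_functorSplitClass_iff hEB hF).1 hi
      obtain ⟨hj, _⟩ := (admissibleMono_functorSplitClass_iff hEB hF).1 hj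
      exact (admissibleMono_functorSplitClass_iff hEB hF).2
        ⟨hEA.mono_comp i j hi hj, by rw [F.map_comp]; infer_instance⟩
    epi_comp p q hp hq := by
      obtain ⟨hp, _⟩ := (admissibleEpi_functorSplitClass_iff hEB hF).1 hp
      obtain ⟨hq, _⟩ := (admissibleEpi_functorSplitClass_iff hEB hF).1 hq
      exact (admissibleEpi_functorSplitClass_iff hEB hF).2
        ⟨hEA.epi_comp p q hp hq, by rw [F.map_comp]; infer_instance⟩
    pushout i t hi := exists_isPushout_admissibleMono_functorSplitClass hEB hF hEA hi t
    pullback d t hd := exists_isPullback_admissibleEpi_functorSplitClass hEB hF hEA hd t }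
end

section
/- The map μ_ℰ sending an indecomposable object X to the lexicographically maximal vector (l_ℰ(X_1), ..., l_ℰ(X_n)) over all chains X_1 ⊊_ℰ ... ⊊_ℰ X_n = X of indecomposable proper ℰ-subobjects is order-preserving: if X ⊊_ℰ Y for indecomposables X, Y, then μ_ℰ(X) ⋘ μ_ℰ(Y) in the Gabriel-Roiter order on finite strictly increasing sequences of natural numbers. -/
open CategoryTheory CategoryTheory.Limits

universe v u

variable {C : Type u} [Category.{v} C] [Preadditive C]

/-- `X` is an `ℰ`-subobject of `Y`: there is an admissible monic `X ↣ Y`. -/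
def ESubobject (E : Set (ShortComplex C)) (X Y : C) : Prop :=
  ∃ i : X ⟶ Y, AdmissibleMono E i

/-- There is a chain `0 = X₀ ↣ X₁ ↣ ⋯ ↣ Xₙ = X` of admissible monics that are
not isomorphisms. -/
def HasChainOfLength (E : Set (ShortComplex C)) (X : C) (n : ℕ) : Prop :=
  ∃ (obj : Fin (n + 1) → C) (f : ∀ i : Fin n, obj i.castSucc ⟶ obj i.succ),
    IsZero (obj 0) ∧ obj (Fin.last n) = X ∧
    ∀ i : Fin n, AdmissibleMono E (f i) ∧ ¬ IsIso (f i)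

/-- The `ℰ`-length of `X`: the supremum of the lengths of chains of proper
admissible monics ending in `X`. -/
noncomputable def eLength (E : Set (ShortComplex C)) (X : C) : ℕ∞ :=
  sSup { n : ℕ∞ | ∃ m : ℕ, HasChainOfLength E X m ∧ n = (m : ℕ∞) }

/-- `X` is a proper `ℰ`-subobject of `Y`: there is an admissible monic `X ↣ Y`
that is not an isomorphism. -/
def ProperESub (E : Set (ShortComplex C)) (X Y : C) : Prop :=
  ∃ i : X ⟶ Y, AdmissibleMono E i ∧ ¬ IsIso i

/-- An object is indecomposable if it is nonzero and in any direct sum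
decomposition one of the summands is zero. -/
def Indecomposable' [HasBinaryBiproducts C] (X : C) : Prop :=
  ¬ IsZero X ∧ ∀ A B : C, Nonempty (X ≅ A ⊞ B) → IsZero A ∨ IsZero B

/-- The Gabriel-Roiter order `⋘` on finite sequences of natural numbers:
lexicographic with the order on `ℕ` reversed, where a prefix is smaller. -/
def grLE : List ℕ → List ℕ → Prop
  | [], _ => True
  | _ :: _, [] => False
  | a :: x, b :: y => b < a ∨ (a = b ∧ grLE x y)

/-- The set of length vectors `(l_ℰ(X₁), …, l_ℰ(Xₙ))` of chains
`X₁ ⊊_ℰ ⋯ ⊊_ℰ Xₙ = X` of indecomposable proper `ℰ`-subobjects ending in `X`. -/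
def grVectors [HasBinaryBiproducts C] (E : Set (ShortComplex C)) (X : C) :
    Set (List ℕ) :=
  { l | ∃ (n : ℕ) (obj : Fin (n + 1) → C),
      (∀ i, Indecomposable' (obj i)) ∧ obj (Fin.last n) = X ∧
      (∀ i : Fin n, ProperESub E (obj i.castSucc) (obj i.succ)) ∧
      l = List.ofFn (fun i : Fin (n + 1) => (eLength E (obj i)).toNat) }

/-- `μ` is a Gabriel-Roiter measure: it sends each indecomposable `X` to the
maximal length vector, in the Gabriel-Roiter order, over all chains of
indecomposable proper `ℰ`-subobjects ending in `X`. -/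
def IsGRMeasure [HasBinaryBiproducts C] (E : Set (ShortComplex C))
    (μ : C → List ℕ) : Prop :=
  ∀ X : C, Indecomposable' X →
    μ X ∈ grVectors E X ∧ ∀ v ∈ grVectors E X, grLE v (μ X)


theorem grLE_trans : ∀ {x y z : List ℕ}, grLE x y → grLE y z → grLE x z
  | [], _, _, _, _ => trivial
  | _ :: _, [], _, h, _ => h.elim
  | _ :: _, _ :: _, [], _, h => h.elim
  | _ :: _, _ :: _, _ :: _, h₁, h₂ => by
    rcases h₁ with h₁ | ⟨rfl, h₁⟩ <;> rcases h₂ with h₂ | ⟨rfl, h₂⟩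
    · exact Or.inl (h₂.trans h₁)
    · exact Or.inl h₁
    · exact Or.inl h₂
    · exact Or.inr ⟨rfl, grLE_trans h₁ h₂⟩

theorem grLE_append_right : ∀ (x l : List ℕ), grLE x (x ++ l)
  | [], _ => trivial
  | _ :: x, l => Or.inr ⟨rfl, grLE_append_right x l⟩

theorem concat_mem_grVectors [HasBinaryBiproducts C] {E : Set (ShortComplex C)} {X Y : C}
    {v : List ℕ} (hv : v ∈ grVectors E X) (hY : Indecomposable' Y) (hXY : ProperESub E X Y) :
    v ++ [(eLength E Y).toNat] ∈ grVectors E Y := by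
  obtain ⟨n, obj, hind, rfl, hchain, rfl⟩ := hv
  refine ⟨n + 1, Fin.snoc obj Y, ?_, Fin.snoc_last _ _, ?_, ?_⟩
  · refine Fin.lastCases ?_ fun i => ?_
    · rwa [Fin.snoc_last]
    · rw [Fin.snoc_castSucc]
      exact hind i
  · refine Fin.lastCases ?_ fun i => ?_
    · rwa [Fin.snoc_castSucc, Fin.succ_last, Fin.snoc_last]
    · rw [Fin.snoc_castSucc, Fin.succ_castSucc, Fin.snoc_castSucc]
      exact hchain i
  · conv_rhs => rw [List.ofFn_succ', List.concat_eq_append, Fin.snoc_last]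
    simp only [Fin.snoc_castSucc]

theorem grMeasure_monotone_general [HasBinaryBiproducts C]
    (E : Set (ShortComplex C))
    (μ : C → List ℕ) (hμ : IsGRMeasure E μ)
    (X Y : C) (hX : Indecomposable' X) (hY : Indecomposable' Y)
    (hXY : ProperESub E X Y) :
    grLE (μ X) (μ Y) :=
  grLE_trans (grLE_append_right (μ X) _)
    ((hμ Y hY).2 _ (concat_mem_grVectors (hμ X hX).1 hY hXY))

/-- The Gabriel-Roiter measure is order-preserving: if `X ⊊_ℰ Y` for
indecomposables `X`, `Y`, then `μ_ℰ(X) ⋘ μ_ℰ(Y)`. -/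
theorem grMeasure_monotone [HasBinaryBiproducts C] [EssentiallySmall.{v} C]
    (E : Set (ShortComplex C)) (hE : IsExactStructure E)
    (hfin : ∀ W : C, eLength E W ≠ ⊤)
    (μ : C → List ℕ) (hμ : IsGRMeasure E μ)
    (X Y : C) (hX : Indecomposable' X) (hY : Indecomposable' Y)
    (hXY : ProperESub E X Y) :
    grLE (μ X) (μ Y) :=
  grMeasure_monotone_general E μ hμ X Y hX hY hXY
end

section
/- If F : X_1 ⊊_ℰ ... ⊊_ℰ X_n = X is a chain of indecomposable proper ℰ-subobjects realizing the Gabriel-Roiter measure of X (i.e., μ_ℰ(X) = (l_ℰ(X_1), ..., l_ℰ(X_n))), then for each i the measure μ_ℰ(X_i) equals the initial subword (l_ℰ(X_1), ..., l_ℰ(X_i)) of μ_ℰ(X). -/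
open CategoryTheory CategoryTheory.Limits

universe v u

variable {C : Type u} [Category.{v} C] [Preadditive C]

/-! The prefix `(l(X₁), …, l(Xᵢ))` of `μ(X)` is the length vector of a chain ending in `Xᵢ`, so it
is `⋘ μ(Xᵢ)`. Conversely, `μ(Xᵢ)` followed by the tail `(l(Xᵢ₊₁), …, l(Xₙ))` is the length vector
of a chain ending in `X`, so it is `⋘ μ(X)`. Lengths strictly increase along proper
`ℰ`-subobjects, so every entry of `μ(Xᵢ)` is smaller than every entry of the tail; the tail can
then be cancelled from the second comparison, and antisymmetry of `⋘` gives the equality. -/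

theorem grLE_antisymm : ∀ {l₁ l₂ : List ℕ}, grLE l₁ l₂ → grLE l₂ l₁ → l₁ = l₂
  | [], [], _, _ => rfl
  | [], _ :: _, _, h => h.elim
  | _ :: _, [], h, _ => h.elim
  | a :: x, b :: y, h₁, h₂ => by
    rcases h₁ with h₁ | ⟨rfl, h₁⟩
    · rcases h₂ with h₂ | ⟨h₂, -⟩ <;> omega
    · rcases h₂ with h₂ | ⟨-, h₂⟩
      · omega
      · rw [grLE_antisymm h₁ h₂]

theorem grLE_of_append_right {t : List ℕ} :
    ∀ {m p : List ℕ}, (∀ a ∈ m, ∀ b ∈ t, a < b) → grLE (m ++ t) (p ++ t) → grLE m p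
  | [], _, _, _ => trivial
  | a :: m, [], hm, h => by
    cases t with
    | nil => exact h
    | cons b t =>
      have hab := hm a (by simp) b (by simp)
      rcases h with h | ⟨h, -⟩ <;> omega
  | a :: m, c :: p, hm, h =>
    Or.imp id (And.imp_right (grLE_of_append_right fun x hx => hm x (by simp [hx]))) h

theorem lt_of_mem_drop_ofFn {α : Type*} [Preorder α] {n : ℕ} {f : Fin n → α} (hf : StrictMono f)
    (i : Fin n) {b : α} (hb : b ∈ (List.ofFn f).drop (i + 1)) : f i < b := by
  obtain ⟨j, hj, rfl⟩ := List.mem_iff_getElem.1 hb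
  simp only [List.length_drop, List.length_ofFn] at hj
  simp only [List.getElem_drop, List.getElem_ofFn]
  exact hf (Fin.mk_lt_mk.2 (by omega))

section Chains

variable {E : Set (ShortComplex C)}

theorem admissibleMono_and_not_isIso_eqToHom_conj_iff {A B A' B' : C} (hA : A' = A)
    (hB : B = B') (g : A ⟶ B) :
    (AdmissibleMono E (eqToHom hA ≫ g ≫ eqToHom hB) ∧ ¬ IsIso (eqToHom hA ≫ g ≫ eqToHom hB)) ↔
      (AdmissibleMono E g ∧ ¬ IsIso g) := by
  subst hA hB
  simp

theorem hasChainOfLength_zero {X : C} (hX : IsZero X) : HasChainOfLength E X 0 :=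
  ⟨fun _ => X, fun i => i.elim0, hX, rfl, fun i => i.elim0⟩

theorem HasChainOfLength.snoc {Y Z : C} {m : ℕ} (h : HasChainOfLength E Y m)
    (hYZ : ProperESub E Y Z) : HasChainOfLength E Z (m + 1) := by
  obtain ⟨obj, f, h0, rfl, hf⟩ := h
  obtain ⟨g, hg⟩ := hYZ
  refine ⟨Fin.snoc obj Z,
    Fin.lastCases
      (motive := fun j =>
        Fin.snoc (α := fun _ => C) obj Z j.castSucc ⟶ Fin.snoc (α := fun _ => C) obj Z j.succ)
      (eqToHom (Fin.snoc_castSucc ..) ≫ g ≫ eqToHom (by rw [Fin.succ_last, Fin.snoc_last]))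
      (fun j => eqToHom (Fin.snoc_castSucc ..) ≫ f j ≫
        eqToHom (by rw [Fin.succ_castSucc, Fin.snoc_castSucc])),
    by simpa using h0, by simp, fun j => ?_⟩
  induction j using Fin.lastCases with
  | last => simpa only [Fin.lastCases_last, admissibleMono_and_not_isIso_eqToHom_conj_iff] using hg
  | cast j =>
    simpa only [Fin.lastCases_castSucc, admissibleMono_and_not_isIso_eqToHom_conj_iff] using hf j

theorem exists_hasChainOfLength (hE : IsExactStructure E) (X : C) :
    ∃ m, HasChainOfLength E X m := by
  by_cases hX : IsZero X
  · exact ⟨0, hasChainOfLength_zero hX⟩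
  -- the kernel `A ↣ X` of the admissible epic `𝟙 X` gives the chain `0 = A ↣ X`
  obtain ⟨A, i, w, hS⟩ := hE.id_epi X
  have hA : IsZero A := by
    obtain ⟨hker⟩ := (hE.kcp _ hS).isKernel
    have : Mono i := mono_of_isLimit_fork hker
    obtain rfl : i = 0 := by simpa using w
    exact IsZero.of_mono_zero A X
  exact ⟨1, (hasChainOfLength_zero hA).snoc
    ⟨i, ⟨X, 𝟙 X, w, hS⟩, fun _ => hX (hA.of_iso (asIso i).symm)⟩⟩

theorem le_eLength {X : C} {m : ℕ} (h : HasChainOfLength E X m) : (m : ℕ∞) ≤ eLength E X :=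
  le_sSup ⟨m, h, rfl⟩

theorem hasChainOfLength_eLength_toNat (hE : IsExactStructure E) {X : C}
    (hX : eLength E X ≠ ⊤) : HasChainOfLength E X (eLength E X).toNat := by
  obtain ⟨m, hm⟩ := exists_hasChainOfLength hE X
  have : Nonempty { n : ℕ∞ | ∃ m : ℕ, HasChainOfLength E X m ∧ n = m } := ⟨⟨m, m, hm, rfl⟩⟩
  obtain ⟨k, hk, hXk⟩ := ENat.sSup_mem_of_nonempty_of_lt_top (lt_top_iff_ne_top.2 hX)
  change eLength E X = k at hXk
  rwa [hXk, ENat.toNat_natCast]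

theorem eLength_toNat_lt_of_properESub (hE : IsExactStructure E) {Y Z : C}
    (hY : eLength E Y ≠ ⊤) (hZ : eLength E Z ≠ ⊤) (h : ProperESub E Y Z) :
    (eLength E Y).toNat < (eLength E Z).toNat :=
  Nat.lt_of_succ_le <| (ENat.toNat_natCast _).symm.trans_le <|
    ENat.toNat_le_toNat (le_eLength ((hasChainOfLength_eLength_toNat hE hY).snoc h)) hZ

theorem strictMono_eLength_toNat (hE : IsExactStructure E) (hfin : ∀ W : C, eLength E W ≠ ⊤)
    {n : ℕ} {obj : Fin (n + 1) → C}
    (hsub : ∀ i : Fin n, ProperESub E (obj i.castSucc) (obj i.succ)) :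
    StrictMono fun i => (eLength E (obj i)).toNat :=
  Fin.strictMono_iff_lt_succ.2 fun i =>
    eLength_toNat_lt_of_properESub hE (hfin _) (hfin _) (hsub i)

end Chains

section GRVectors

variable [HasBinaryBiproducts C] {E : Set (ShortComplex C)}

theorem le_eLength_toNat_of_mem_grVectors (hE : IsExactStructure E)
    (hfin : ∀ W : C, eLength E W ≠ ⊤) {X : C} {l : List ℕ} (hl : l ∈ grVectors E X) :
    ∀ a ∈ l, a ≤ (eLength E X).toNat := by
  obtain ⟨n, obj, -, rfl, hsub, rfl⟩ := hl
  intro a ha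
  obtain ⟨j, rfl⟩ := List.mem_ofFn.1 ha
  exact (strictMono_eLength_toNat hE hfin hsub).monotone (Fin.le_last j)

theorem take_ofFn_mem_grVectors {n : ℕ} {obj : Fin (n + 1) → C}
    (hind : ∀ i, Indecomposable' (obj i))
    (hsub : ∀ i : Fin n, ProperESub E (obj i.castSucc) (obj i.succ)) (i : Fin (n + 1)) :
    (List.ofFn fun j => (eLength E (obj j)).toNat).take (i + 1) ∈ grVectors E (obj i) :=
  ⟨i, Fin.take (i + 1) i.isLt obj, fun j => hind _, rfl, fun j => hsub (Fin.castLE (by omega) j),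
    (Fin.ofFn_take_eq_take_ofFn i.isLt _).symm⟩

theorem append_singleton_mem_grVectors {Y Z : C} {l : List ℕ} (hl : l ∈ grVectors E Y)
    (hYZ : ProperESub E Y Z) (hZ : Indecomposable' Z) :
    l ++ [(eLength E Z).toNat] ∈ grVectors E Z := by
  obtain ⟨n, obj, hind, rfl, hsub, rfl⟩ := hl
  refine ⟨n + 1, Fin.snoc obj Z, Fin.lastCases (by simpa using hZ) (by simpa using hind),
    by simp, Fin.lastCases (by simpa using hYZ) fun j => ?_, ?_⟩
  · conv_rhs => rw [List.ofFn_succ']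
    simp only [Fin.snoc_castSucc, Fin.snoc_last, List.concat_eq_append]
  · rw [Fin.succ_castSucc, Fin.snoc_castSucc, Fin.snoc_castSucc]
    exact hsub j

theorem append_drop_ofFn_mem_grVectors {n : ℕ} {obj : Fin (n + 1) → C}
    (hind : ∀ i, Indecomposable' (obj i))
    (hsub : ∀ i : Fin n, ProperESub E (obj i.castSucc) (obj i.succ)) (i : Fin (n + 1))
    {m : List ℕ} (hm : m ∈ grVectors E (obj i)) :
    m ++ (List.ofFn fun j => (eLength E (obj j)).toNat).drop (i + 1) ∈
      grVectors E (obj (Fin.last n)) := by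
  induction i using Fin.reverseInduction generalizing m with
  | last => rwa [Fin.val_last, List.drop_of_length_le (by simp), List.append_nil]
  | cast i ih =>
    have hdrop : (List.ofFn fun j => (eLength E (obj j)).toNat).drop (i.castSucc + 1) =
        (eLength E (obj i.succ)).toNat ::
          (List.ofFn fun j => (eLength E (obj j)).toNat).drop (i.succ + 1) := by
      rw [List.drop_eq_getElem_cons (by simp)]
      simp
    rw [hdrop]
    simpa only [List.append_assoc, List.singleton_append] using ih (append_singleton_mem_grVectors hm (hsub i) (hind i.succ))

end GRVectors

theorem grMeasure_of_realizing_chain_general [HasBinaryBiproducts C]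
    (E : Set (ShortComplex C)) (hE : IsExactStructure E)
    (hfin : ∀ W : C, eLength E W ≠ ⊤)
    (μ : C → List ℕ) (hμ : IsGRMeasure E μ)
    (X : C) (hX : Indecomposable' X)
    (n : ℕ) (obj : Fin (n + 1) → C)
    (hind : ∀ i, Indecomposable' (obj i)) (hlast : obj (Fin.last n) = X)
    (hsub : ∀ i : Fin n, ProperESub E (obj i.castSucc) (obj i.succ))
    (hreal : μ X = List.ofFn (fun i : Fin (n + 1) => (eLength E (obj i)).toNat)) :
    ∀ i : Fin (n + 1), μ (obj i) = (μ X).take (i + 1) := by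
  intro i
  have hμi := hμ (obj i) (hind i)
  set L := List.ofFn fun j => (eLength E (obj j)).toNat
  have hle : grLE (L.take (i + 1)) (μ (obj i)) := hμi.2 _ (take_ofFn_mem_grVectors hind hsub i)
  have hge : grLE (μ (obj i) ++ L.drop (i + 1)) (L.take (i + 1) ++ L.drop (i + 1)) := by
    simpa only [List.take_append_drop, hreal] using
      (hμ X hX).2 _ (hlast ▸ append_drop_ofFn_mem_grVectors hind hsub i hμi.1)
  have hsep : ∀ a ∈ μ (obj i), ∀ b ∈ L.drop (i + 1), a < b := fun a ha b hb =>
    (le_eLength_toNat_of_mem_grVectors hE hfin hμi.1 a ha).trans_lt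
      (lt_of_mem_drop_ofFn (strictMono_eLength_toNat hE hfin hsub) i hb)
  rw [hreal]
  exact grLE_antisymm (grLE_of_append_right hsep hge) hle

/-- If a chain of indecomposable proper `ℰ`-subobjects realizes the
Gabriel-Roiter measure of `X`, then for each `i` the measure of `Xᵢ` is the
initial subword of length `i` of the measure of `X`. -/
theorem grMeasure_of_realizing_chain [HasBinaryBiproducts C] [EssentiallySmall.{v} C]
    (E : Set (ShortComplex C)) (hE : IsExactStructure E)
    (hfin : ∀ W : C, eLength E W ≠ ⊤)
    (μ : C → List ℕ) (hμ : IsGRMeasure E μ)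
    (X : C) (hX : Indecomposable' X)
    (n : ℕ) (obj : Fin (n + 1) → C)
    (hind : ∀ i, Indecomposable' (obj i)) (hlast : obj (Fin.last n) = X)
    (hsub : ∀ i : Fin n, ProperESub E (obj i.castSucc) (obj i.succ))
    (hreal : μ X = List.ofFn (fun i : Fin (n + 1) => (eLength E (obj i)).toNat)) :
    ∀ i : Fin (n + 1), μ (obj i) = (μ X).take (i + 1) :=
  grMeasure_of_realizing_chain_general E hE hfin μ hμ X hX n obj hind hlast hsub hreal
end
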